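/- arXiv:1706.08602 — 2 statements merged into one kernel-verified Lean document; each statement's English description precedes it below -/
import Mathlib

section
/- If A is a Metzler matrix (all off-diagonal entries nonnegative), then the maximum real part of the eigenvalues of A, denoted λ_max(A), is itself an eigenvalue of A. -/
open Matrix

/-- A real square matrix is Metzler if all its off-diagonal entries are nonnegative. -/
def Metzler {n : ℕ} (A : Matrix (Fin n) (Fin n) ℝ) : Prop :=
  ∀ i j, i ≠ j → 0 ≤ A i j

/-- A square matrix is irreducible if no nontrivial set of indices is "closed":
for every nonempty proper subset `S` there is a nonzero entry `A i j` with `i ∈ S`, `j ∉ S`. -/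
def MatIrreducible {n : ℕ} (A : Matrix (Fin n) (Fin n) ℝ) : Prop :=
  ∀ S : Set (Fin n), S.Nonempty → S ≠ Set.univ → ∃ i ∈ S, ∃ j ∉ S, A i j ≠ 0

/-- `lamMax A` is the maximum real part of the (complex) eigenvalues of `A`. -/
noncomputable def lamMax {n : ℕ} (A : Matrix (Fin n) (Fin n) ℝ) : ℝ :=
  sSup {x : ℝ | ∃ z ∈ spectrum ℂ (A.map (algebraMap ℝ ℂ)), z.re = x}


open Matrix Filter Topology
open scoped NNReal ENNReal Topology

namespace PFaux

attribute [local instance] Matrix.linftyOpNormedRing Matrix.linftyOpNormedAlgebra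

noncomputable instance {n : ℕ} : CompleteSpace (Matrix (Fin n) (Fin n) ℂ) :=
  inferInstance

variable {n : ℕ}

/-- membership in spectrum via determinant -/
lemma mem_spec_iff_det (M : Matrix (Fin n) (Fin n) ℂ) (z : ℂ) :
    z ∈ spectrum ℂ M ↔ (z • (1 : Matrix (Fin n) (Fin n) ℂ) - M).det = 0 := by
  simp [spectrum.mem_iff, Algebra.algebraMap_eq_smul_one, Matrix.isUnit_iff_isUnit_det,
    isUnit_iff_ne_zero]

lemma mem_spec_of_mulVec {M : Matrix (Fin n) (Fin n) ℂ} {z : ℂ} {v : Fin n → ℂ}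
    (hv : v ≠ 0) (h : M.mulVec v = z • v) : z ∈ spectrum ℂ M := by
  rw [mem_spec_iff_det]
  rw [← Matrix.exists_mulVec_eq_zero_iff]
  refine ⟨v, hv, ?_⟩
  rw [sub_mulVec, smul_mulVec, one_mulVec, h, sub_self]

lemma exists_mulVec_of_mem_spec {M : Matrix (Fin n) (Fin n) ℂ} {z : ℂ}
    (h : z ∈ spectrum ℂ M) : ∃ v, v ≠ 0 ∧ M.mulVec v = z • v := by
  rw [mem_spec_iff_det, ← Matrix.exists_mulVec_eq_zero_iff] at h
  obtain ⟨v, hv, h⟩ := h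
  refine ⟨v, hv, ?_⟩
  rw [sub_mulVec, smul_mulVec, one_mulVec, sub_eq_zero] at h
  rw [h]


lemma pow_entry_nonneg {B : Matrix (Fin n) (Fin n) ℝ} (hB : ∀ i j, 0 ≤ B i j) (k : ℕ) :
    ∀ i j, 0 ≤ (B ^ k) i j := by
  induction k with
  | zero => intro i j; rw [pow_zero]; by_cases h : i = j <;> simp [Matrix.one_apply, h]
  | succ k ih =>
    intro i j
    rw [pow_succ, Matrix.mul_apply]
    exact Finset.sum_nonneg fun l _ => mul_nonneg (ih i l) (hB l j)

lemma mulVec_mono {B : Matrix (Fin n) (Fin n) ℝ} (hB : ∀ i j, 0 ≤ B i j)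
    {x y : Fin n → ℝ} (hxy : ∀ i, x i ≤ y i) (i : Fin n) :
    (B.mulVec x) i ≤ (B.mulVec y) i := by
  simp only [Matrix.mulVec, dotProduct]
  exact Finset.sum_le_sum fun j _ => mul_le_mul_of_nonneg_left (hxy j) (hB i j)

lemma pow_mulVec_lower {B : Matrix (Fin n) (Fin n) ℝ} (hB : ∀ i j, 0 ≤ B i j)
    {u : Fin n → ℝ} {t : ℝ} (ht : 0 ≤ t)
    (h : ∀ i, t * u i ≤ (B.mulVec u) i) (k : ℕ) :
    ∀ i, t ^ k * u i ≤ ((B ^ k).mulVec u) i := by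
  induction k with
  | zero => intro i; simp [Matrix.one_mulVec]
  | succ k ih =>
    intro i
    calc t ^ (k+1) * u i = t * (t ^ k * u i) := by ring
      _ ≤ t * ((B ^ k).mulVec u) i := mul_le_mul_of_nonneg_left (ih i) ht
      _ = ((B ^ k).mulVec (t • u)) i := by rw [Matrix.mulVec_smul]; rfl
      _ ≤ ((B ^ k).mulVec (B.mulVec u)) i :=
          mulVec_mono (pow_entry_nonneg hB k) (fun j => h j) i
      _ = ((B ^ (k+1)).mulVec u) i := by rw [Matrix.mulVec_mulVec, ← pow_succ]

/-- row sums are bounded by the linfty operator norm of the complex version. -/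
lemma row_sum_le_norm {M : Matrix (Fin n) (Fin n) ℝ} (hM : ∀ i j, 0 ≤ M i j) (i : Fin n) :
    (∑ j, M i j) ≤ ‖M.map (algebraMap ℝ ℂ)‖ := by
  have h1 : ((∑ j, ‖(M.map (algebraMap ℝ ℂ)) i j‖₊ : ℝ≥0) : ℝ) = ∑ j, M i j := by
    push_cast
    refine Finset.sum_congr rfl fun j _ => ?_
    simp [Matrix.map_apply, Complex.norm_real, Real.norm_eq_abs, abs_of_nonneg (hM i j)]
  rw [Matrix.linfty_opNorm_def, ← h1]
  exact_mod_cast Finset.le_sup (f := fun i => ∑ j, ‖(M.map (algebraMap ℝ ℂ)) i j‖₊)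
    (Finset.mem_univ i)
/-- Key lemma: if `B` is entrywise nonnegative and `B *ᵥ u ≥ t • u` for some nonzero
nonnegative vector `u` and `t ≥ 0`, then `t` is at most any bound on the moduli of the
complex eigenvalues of `B`. -/
lemma subeigen_le_bound {B : Matrix (Fin n) (Fin n) ℝ} (hB : ∀ i j, 0 ≤ B i j)
    {u : Fin n → ℝ} (hu : ∀ i, 0 ≤ u i) (hu0 : u ≠ 0) {t : ℝ} (ht : 0 ≤ t)
    (h : ∀ i, t * u i ≤ (B.mulVec u) i) {r : ℝ} (hr : 0 ≤ r)
    (hspec : ∀ z ∈ spectrum ℂ (B.map (algebraMap ℝ ℂ)), ‖z‖ ≤ r) :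
    t ≤ r := by
  classical
  set Bc : Matrix (Fin n) (Fin n) ℂ := B.map (algebraMap ℝ ℂ) with hBc
  have hmap : ∀ k : ℕ, Bc ^ k = (B ^ k).map (algebraMap ℝ ℂ) := by
    intro k
    have : Bc = (algebraMap ℝ ℂ).mapMatrix B := rfl
    rw [this, ← map_pow, RingHom.mapMatrix_apply]
  -- pick a coordinate where u is positive
  obtain ⟨i0, hi0⟩ : ∃ i, u i ≠ 0 := Function.ne_iff.mp hu0
  have hi0' : 0 < u i0 := lt_of_le_of_ne (hu i0) (Ne.symm hi0)
  set U : ℝ := ∑ j, u j with hU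
  have hUpos : 0 < U := lt_of_lt_of_le hi0' (Finset.single_le_sum (fun j _ => hu j)
    (Finset.mem_univ i0))
  -- key inequality for all powers
  have hkey : ∀ k : ℕ, t ^ k * u i0 ≤ ‖Bc ^ k‖ * U := by
    intro k
    refine le_trans (pow_mulVec_lower hB ht h k i0) ?_
    have h1 : ((B ^ k).mulVec u) i0 ≤ (∑ j, (B ^ k) i0 j) * U := by
      simp only [Matrix.mulVec, dotProduct, Finset.sum_mul]
      refine Finset.sum_le_sum fun j _ => ?_
      refine mul_le_mul_of_nonneg_left ?_ (pow_entry_nonneg hB k i0 j)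
      exact Finset.single_le_sum (fun l _ => hu l) (Finset.mem_univ j)
    refine le_trans h1 ?_
    refine mul_le_mul_of_nonneg_right ?_ hUpos.le
    rw [hmap k]
    exact row_sum_le_norm (pow_entry_nonneg hB k) i0
  -- spectral radius bound
  have hT : spectralRadius ℂ Bc ≤ ENNReal.ofReal r := by
    rw [spectralRadius]
    refine iSup₂_le fun z hz => ?_
    rw [← ENNReal.ofReal_coe_nnreal, coe_nnnorm]
    exact ENNReal.ofReal_le_ofReal (hspec z hz)
  have hgel := spectrum.pow_nnnorm_pow_one_div_tendsto_nhds_spectralRadius Bc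
  -- auxiliary sequence
  set a : ℝ := u i0
  set f : ℕ → ℝ≥0∞ := fun k => ENNReal.ofReal (t * (a / U) ^ ((1:ℝ) / k)) with hf
  have hfle : ∀ᶠ k in atTop, f k ≤ (‖Bc ^ k‖₊ : ℝ≥0∞) ^ ((1:ℝ) / k) := by
    filter_upwards [eventually_ge_atTop 1] with k hk
    have hk0 : (k : ℝ) ≠ 0 := Nat.cast_ne_zero.mpr (by omega)
    have hreal : t * (a / U) ^ ((1:ℝ) / k) ≤ ‖Bc ^ k‖ ^ ((1:ℝ) / k) := by
      have h0 : t ^ k * (a / U) ≤ ‖Bc ^ k‖ := by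
        rw [mul_div_assoc'] at *
        exact (div_le_iff₀ hUpos).mpr (hkey k)
      have h1 : (t ^ k * (a / U)) ^ ((1:ℝ) / k) ≤ ‖Bc ^ k‖ ^ ((1:ℝ) / k) :=
        Real.rpow_le_rpow (mul_nonneg (pow_nonneg ht k)
          (div_nonneg hi0'.le hUpos.le)) h0 (by positivity)
      calc t * (a / U) ^ ((1:ℝ) / k)
          = (t ^ k) ^ ((1:ℝ) / k) * (a / U) ^ ((1:ℝ) / k) := by
            rw [← Real.rpow_natCast t k, ← Real.rpow_mul ht, mul_one_div,
              div_self hk0, Real.rpow_one]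
        _ = (t ^ k * (a / U)) ^ ((1:ℝ) / k) := by
            rw [Real.mul_rpow (pow_nonneg ht k) (div_nonneg hi0'.le hUpos.le)]
        _ ≤ ‖Bc ^ k‖ ^ ((1:ℝ) / k) := h1
    have hrw : ((‖Bc ^ k‖₊ : ℝ≥0∞) : ℝ≥0∞) ^ ((1:ℝ) / k)
        = ENNReal.ofReal (‖Bc ^ k‖ ^ ((1:ℝ) / k)) := by
      rw [← ENNReal.ofReal_rpow_of_nonneg (norm_nonneg _) (by positivity),
        ← coe_nnnorm, ENNReal.ofReal_coe_nnreal]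
    rw [hf]
    simp only
    rw [hrw]
    exact ENNReal.ofReal_le_ofReal hreal
  have hftend : Tendsto f atTop (𝓝 (ENNReal.ofReal t)) := by
    have h1 : Tendsto (fun k : ℕ => (1:ℝ) / k) atTop (𝓝 0) :=
      tendsto_one_div_atTop_nhds_zero_nat
    have h2 : Tendsto (fun k : ℕ => (a / U) ^ ((1:ℝ) / k)) atTop (𝓝 1) := by
      have hc : ContinuousAt (fun x : ℝ => (a / U) ^ x) 0 :=
        Real.continuousAt_const_rpow (by positivity)
      have := hc.tendsto.comp h1
      simpa [Real.rpow_zero, Function.comp_def] using this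
    have h3 : Tendsto (fun k : ℕ => t * (a / U) ^ ((1:ℝ) / k)) atTop (𝓝 t) := by
      have := h2.const_mul t
      simpa using this
    exact (ENNReal.continuous_ofReal.continuousAt.tendsto).comp h3
  have hle : ENNReal.ofReal t ≤ spectralRadius ℂ Bc :=
    le_of_tendsto_of_tendsto hftend hgel hfle
  have := le_trans hle hT
  exact (ENNReal.ofReal_le_ofReal_iff hr).mp this
lemma pf_pos (hn : 0 < n) {B : Matrix (Fin n) (Fin n) ℝ} (hB : ∀ i j, 0 < B i j) :
    ∃ r : ℝ, ∃ u : Fin n → ℝ, 0 ≤ r ∧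
      (∀ z ∈ spectrum ℂ (B.map (algebraMap ℝ ℂ)), ‖z‖ ≤ r) ∧
      (∀ i, 0 ≤ u i) ∧ u ≠ 0 ∧ B.mulVec u = r • u := by
  classical
  haveI : Nonempty (Fin n) := ⟨⟨0, hn⟩⟩
  set Bc : Matrix (Fin n) (Fin n) ℂ := B.map (algebraMap ℝ ℂ) with hBcdef
  have hne : (spectrum ℂ Bc).Nonempty := spectrum.nonempty Bc
  have hfin : (spectrum ℂ Bc).Finite := Matrix.finite_spectrum Bc
  obtain ⟨z0, hz0mem, hz0max⟩ := Finset.exists_max_image hfin.toFinset (‖·‖)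
    (by rwa [Set.Finite.toFinset_nonempty])
  rw [Set.Finite.mem_toFinset] at hz0mem
  set r : ℝ := ‖z0‖ with hrdef
  have hr0 : 0 ≤ r := norm_nonneg z0
  have hspecbd : ∀ z ∈ spectrum ℂ Bc, ‖z‖ ≤ r := by
    intro z hz
    exact hz0max z (hfin.mem_toFinset.mpr hz)
  obtain ⟨v, hv0, hv⟩ := exists_mulVec_of_mem_spec hz0mem
  set u : Fin n → ℝ := fun i => ‖(v i)‖ with hudef
  have hu : ∀ i, 0 ≤ u i := fun i => norm_nonneg _
  have hu0 : u ≠ 0 := by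
    intro h
    apply hv0
    funext i
    have := congrFun h i
    simpa [hudef, norm_eq_zero] using this
  have hBnn : ∀ i j, 0 ≤ B i j := fun i j => (hB i j).le
  have hsub : ∀ i, r * u i ≤ (B.mulVec u) i := by
    intro i
    have h1 : r * u i = ‖((Bc.mulVec v) i)‖ := by
      rw [hv]
      simp [hudef, hrdef, _root_.map_mul]
    rw [h1]
    have h2 : (Bc.mulVec v) i = ∑ j, Bc i j * v j := rfl
    rw [h2]
    refine le_trans (norm_sum_le _ _) ?_
    refine le_of_eq (Finset.sum_congr rfl fun j _ => ?_)
    rw [norm_mul]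
    simp only [hBcdef, Matrix.map_apply]
    rw [show ((algebraMap ℝ ℂ) (B i j)) = ((B i j : ℝ) : ℂ) from rfl,
      Complex.norm_real, Real.norm_eq_abs, abs_of_nonneg (hBnn i j)]
  by_cases heq : B.mulVec u = r • u
  · exact ⟨r, u, hr0, hspecbd, hu, hu0, heq⟩
  · exfalso
    set d : Fin n → ℝ := B.mulVec u - r • u with hddef
    have hd : ∀ i, 0 ≤ d i := fun i => sub_nonneg.mpr (hsub i)
    have hd0 : d ≠ 0 := sub_ne_zero.mpr heq
    obtain ⟨j0, hj0⟩ : ∃ j, d j ≠ 0 := Function.ne_iff.mp hd0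
    have hj0' : 0 < d j0 := lt_of_le_of_ne (hd j0) (Ne.symm hj0)
    obtain ⟨j1, hj1⟩ : ∃ j, u j ≠ 0 := Function.ne_iff.mp hu0
    have hj1' : 0 < u j1 := lt_of_le_of_ne (hu j1) (Ne.symm hj1)
    set w : Fin n → ℝ := B.mulVec u with hwdef
    have hw : ∀ i, 0 < w i := by
      intro i
      show 0 < ∑ j, B i j * u j
      refine Finset.sum_pos' (fun j _ => mul_nonneg (hBnn i j) (hu j)) ?_
      exact ⟨j1, Finset.mem_univ j1, mul_pos (hB i j1) hj1'⟩
    have hBd : ∀ i, 0 < (B.mulVec d) i := by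
      intro i
      show 0 < ∑ j, B i j * d j
      refine Finset.sum_pos' (fun j _ => mul_nonneg (hBnn i j) (hd j)) ?_
      exact ⟨j0, Finset.mem_univ j0, mul_pos (hB i j0) hj0'⟩
    have hww : B.mulVec w = r • w + B.mulVec d := by
      have h1 : w = r • u + d := by rw [hddef]; ring_nf
      calc B.mulVec w = B.mulVec (r • u + d) := by rw [← h1]
        _ = r • B.mulVec u + B.mulVec d := by
            rw [Matrix.mulVec_add, Matrix.mulVec_smul]
        _ = r • w + B.mulVec d := rfl
    have hstrict : ∀ i, r * w i < (B.mulVec w) i := by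
      intro i
      rw [hww]
      have : (r • w + B.mulVec d) i = r * w i + (B.mulVec d) i := rfl
      rw [this]
      linarith [hBd i]
    set t' : ℝ := Finset.univ.inf' Finset.univ_nonempty
      (fun i => (B.mulVec w) i / w i) with ht'def
    have ht'r : r < t' := by
      rw [ht'def, Finset.lt_inf'_iff]
      intro i _
      rw [lt_div_iff₀ (hw i)]
      exact hstrict i
    have ht'le : ∀ i, t' * w i ≤ (B.mulVec w) i := by
      intro i
      have h1 : t' ≤ (B.mulVec w) i / w i :=
        Finset.inf'_le _ (Finset.mem_univ i)
      rw [← le_div_iff₀ (hw i)] at *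
      exact h1
    have hwne : w ≠ 0 := by
      intro h
      exact (hw j1).ne' (congrFun h j1)
    have := subeigen_le_bound hBnn (fun i => (hw i).le) hwne (le_trans hr0 ht'r.le)
      ht'le hr0 hspecbd
    linarith
lemma abs_eigen_subeigen {B : Matrix (Fin n) (Fin n) ℝ} (hB : ∀ i j, 0 ≤ B i j) {z : ℂ}
    (hz : z ∈ spectrum ℂ (B.map (algebraMap ℝ ℂ))) :
    ∃ u : Fin n → ℝ, (∀ i, 0 ≤ u i) ∧ u ≠ 0 ∧
      ∀ i, ‖z‖ * u i ≤ (B.mulVec u) i := by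
  obtain ⟨v, hv0, hv⟩ := exists_mulVec_of_mem_spec hz
  refine ⟨fun i => ‖(v i)‖, fun i => norm_nonneg _, ?_, ?_⟩
  · intro h
    apply hv0
    funext i
    have := congrFun h i
    simpa [norm_eq_zero] using this
  · intro i
    have h1 : ‖z‖ * ‖(v i)‖
        = ‖((B.map (algebraMap ℝ ℂ)).mulVec v) i‖ := by
      rw [hv]
      simp [_root_.map_mul]
    rw [h1]
    have h2 : ((B.map (algebraMap ℝ ℂ)).mulVec v) i = ∑ j, (B.map (algebraMap ℝ ℂ)) i j * v j :=
      rfl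
    rw [h2]
    refine le_trans (norm_sum_le _ _) ?_
    refine le_of_eq (Finset.sum_congr rfl fun j _ => ?_)
    rw [norm_mul]
    simp only [Matrix.map_apply]
    rw [show ((algebraMap ℝ ℂ) (B i j)) = ((B i j : ℝ) : ℂ) from rfl,
      Complex.norm_real, Real.norm_eq_abs, abs_of_nonneg (hB i j)]

lemma map_smul_one_sub (M : Matrix (Fin n) (Fin n) ℝ) (t : ℝ) :
    ((t • (1 : Matrix (Fin n) (Fin n) ℝ) - M).map (algebraMap ℝ ℂ))
      = (t : ℂ) • (1 : Matrix (Fin n) (Fin n) ℂ) - M.map (algebraMap ℝ ℂ) := by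
  classical
  ext i j
  by_cases h : i = j <;>
    simp [Matrix.map_apply, Matrix.one_apply, h]

lemma real_mem_spec_of_det {M : Matrix (Fin n) (Fin n) ℝ} {t : ℝ}
    (h : (t • (1 : Matrix (Fin n) (Fin n) ℝ) - M).det = 0) :
    (t : ℂ) ∈ spectrum ℂ (M.map (algebraMap ℝ ℂ)) := by
  rw [mem_spec_iff_det, ← map_smul_one_sub, ← RingHom.mapMatrix_apply, ← RingHom.map_det, h,
    map_zero]

lemma pf_nonneg (hn : 0 < n) {B : Matrix (Fin n) (Fin n) ℝ} (hB : ∀ i j, 0 ≤ B i j) :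
    ∃ r : ℝ, 0 ≤ r ∧ (r : ℂ) ∈ spectrum ℂ (B.map (algebraMap ℝ ℂ)) ∧
      ∀ z ∈ spectrum ℂ (B.map (algebraMap ℝ ℂ)), ‖z‖ ≤ r := by
  classical
  haveI : Nonempty (Fin n) := ⟨⟨0, hn⟩⟩
  set J : Matrix (Fin n) (Fin n) ℝ := Matrix.of fun _ _ => (1 : ℝ) with hJ
  set ε : ℕ → ℝ := fun k => 1 / (k + 1) with hε
  have hεpos : ∀ k, 0 < ε k := fun k => by positivity
  have hεle : ∀ k, ε k ≤ 1 := by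
    intro k
    rw [hε]
    simp only
    rw [div_le_one (by positivity)]
    linarith [Nat.cast_nonneg (α := ℝ) k]
  set Bk : ℕ → Matrix (Fin n) (Fin n) ℝ := fun k => B + (ε k) • J with hBk
  have hpos : ∀ k i j, 0 < Bk k i j := by
    intro k i j
    have : Bk k i j = B i j + ε k := by simp [hBk, hJ]
    rw [this]
    linarith [hB i j, hεpos k]
  have H : ∀ k : ℕ, ∃ r : ℝ, ∃ u : Fin n → ℝ, 0 ≤ r ∧
      (∀ z ∈ spectrum ℂ ((Bk k).map (algebraMap ℝ ℂ)), ‖z‖ ≤ r) ∧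
      (∀ i, 0 ≤ u i) ∧ u ≠ 0 ∧ (Bk k).mulVec u = r • u :=
    fun k => pf_pos hn (hpos k)
  choose rk uk hrk0 hbd hu hu0 heig using H
  -- each rk k is a real eigenvalue of Bk k
  have hdet : ∀ k, ((rk k) • (1 : Matrix (Fin n) (Fin n) ℝ) - Bk k).det = 0 := by
    intro k
    rw [← Matrix.exists_mulVec_eq_zero_iff]
    refine ⟨uk k, hu0 k, ?_⟩
    rw [Matrix.sub_mulVec, Matrix.smul_mulVec, Matrix.one_mulVec, heig k, sub_self]
  -- uniform bound on rk
  set C : ℝ := ‖B.map (algebraMap ℝ ℂ)‖ + ‖J.map (algebraMap ℝ ℂ)‖ with hC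
  have hub : ∀ k, rk k ≤ C := by
    intro k
    have hmem : ((rk k : ℝ) : ℂ) ∈ spectrum ℂ ((Bk k).map (algebraMap ℝ ℂ)) :=
      real_mem_spec_of_det (hdet k)
    have h1 : ‖((rk k : ℝ) : ℂ)‖ ≤ ‖(Bk k).map (algebraMap ℝ ℂ)‖ :=
      spectrum.norm_le_norm_of_mem hmem
    have h2 : (Bk k).map (algebraMap ℝ ℂ)
        = B.map (algebraMap ℝ ℂ) + ((ε k : ℂ)) • J.map (algebraMap ℝ ℂ) := by
      ext i j
      simp [hBk, Matrix.map_apply, hJ]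
    have h3 : ‖(Bk k).map (algebraMap ℝ ℂ)‖ ≤ C := by
      rw [h2, hC]
      refine le_trans (norm_add_le _ _) ?_
      gcongr
      rw [norm_smul]
      have : ‖(ε k : ℂ)‖ ≤ 1 := by
        rw [Complex.norm_real, Real.norm_eq_abs, abs_of_pos (hεpos k)]
        exact hεle k
      nlinarith [norm_nonneg (J.map (algebraMap ℝ ℂ))]
    calc rk k ≤ |rk k| := le_abs_self _
      _ = ‖((rk k : ℝ) : ℂ)‖ := by rw [Complex.norm_real, Real.norm_eq_abs]
      _ ≤ _ := le_trans h1 h3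
  -- extract a convergent subsequence of (rk)
  have hmem : ∀ k, rk k ∈ Set.Icc (0 : ℝ) C := fun k => ⟨hrk0 k, hub k⟩
  obtain ⟨r, hrIcc, φ, hφ, hφtend⟩ := (isCompact_Icc).tendsto_subseq hmem
  -- pass to the limit in the determinant equation
  have hεtend : Tendsto (fun k => ε (φ k)) atTop (𝓝 0) := by
    refine tendsto_of_tendsto_of_tendsto_of_le_of_le tendsto_const_nhds
      tendsto_one_div_add_atTop_nhds_zero_nat (fun k => (hεpos (φ k)).le) (fun k => ?_)
    rw [hε]
    simp only
    have h1 : (k : ℝ) + 1 ≤ (φ k : ℝ) + 1 := by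
      have h0 : k ≤ φ k := hφ.le_apply
      have h0' : (k : ℝ) ≤ (φ k : ℝ) := Nat.cast_le.mpr h0
      linarith
    exact one_div_le_one_div_of_le (by positivity) h1
  have hcont : Continuous fun p : ℝ × ℝ =>
      (p.1 • (1 : Matrix (Fin n) (Fin n) ℝ) - (B + p.2 • J)).det := by
    refine Continuous.matrix_det ?_
    refine continuous_matrix fun i j => ?_
    have : (fun p : ℝ × ℝ => (p.1 • (1 : Matrix (Fin n) (Fin n) ℝ) - (B + p.2 • J)) i j)
        = fun p : ℝ × ℝ => p.1 * (1 : Matrix (Fin n) (Fin n) ℝ) i j - (B i j + p.2 * J i j) := by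
      funext p
      simp [Matrix.sub_apply, Matrix.smul_apply, Matrix.add_apply, smul_eq_mul]
    rw [this]
    fun_prop
  have hdet0 : (r • (1 : Matrix (Fin n) (Fin n) ℝ) - B).det = 0 := by
    have htend2 : Tendsto (fun k => (rk (φ k), ε (φ k))) atTop (𝓝 (r, 0)) :=
      hφtend.prodMk_nhds hεtend
    have h4 := (hcont.tendsto (r, 0)).comp htend2
    have h4' : Tendsto (fun _ : ℕ => (0 : ℝ)) atTop
        (𝓝 (((r, (0:ℝ)).1 • (1 : Matrix (Fin n) (Fin n) ℝ) - (B + ((r, (0:ℝ)).2) • J)).det)) :=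
      h4.congr (fun k => hdet (φ k))
    have h6 := tendsto_nhds_unique h4' tendsto_const_nhds
    rw [← h6]
    simp
  refine ⟨r, hrIcc.1, real_mem_spec_of_det hdet0, ?_⟩
  -- the modulus bound
  intro z hz
  obtain ⟨u, hu', hu0', hsub⟩ := abs_eigen_subeigen hB hz
  have hkbd : ∀ k, ‖z‖ ≤ rk (φ k) := by
    intro k
    refine subeigen_le_bound (fun i j => (hpos (φ k) i j).le) hu' hu0'
      (norm_nonneg z) ?_ (hrk0 (φ k)) (hbd (φ k))
    intro i
    refine le_trans (hsub i) ?_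
    have : (Bk (φ k)).mulVec u i = B.mulVec u i + ε (φ k) * ∑ j, u j := by
      simp [hBk, Matrix.add_mulVec, Matrix.smul_mulVec, hJ, Matrix.mulVec,
        dotProduct, Finset.mul_sum, add_mul, Finset.sum_add_distrib]
    rw [this]
    have : 0 ≤ ε (φ k) * ∑ j, u j :=
      mul_nonneg (hεpos (φ k)).le (Finset.sum_nonneg fun j _ => hu' j)
    linarith
  exact ge_of_tendsto' hφtend hkbd

lemma map_add_smul_one (M : Matrix (Fin n) (Fin n) ℝ) (c : ℝ) :
    ((M + c • (1 : Matrix (Fin n) (Fin n) ℝ)).map (algebraMap ℝ ℂ))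
      = M.map (algebraMap ℝ ℂ) + (c : ℂ) • (1 : Matrix (Fin n) (Fin n) ℂ) := by
  classical
  ext i j
  by_cases h : i = j <;>
    simp [Matrix.map_apply, Matrix.one_apply, h]

end PFaux

open PFaux in
/-- If `A` is a Metzler matrix, then the maximum real part of its eigenvalues
is itself an eigenvalue of `A`. -/
theorem lamMax_mem_spectrum {n : ℕ} (hn : 0 < n) (A : Matrix (Fin n) (Fin n) ℝ)
    (hA : Metzler A) :
    ((lamMax A : ℝ) : ℂ) ∈ spectrum ℂ (A.map (algebraMap ℝ ℂ)) := by
  classical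
  set c : ℝ := ∑ i, |A i i| with hc
  set B : Matrix (Fin n) (Fin n) ℝ := A + c • (1 : Matrix (Fin n) (Fin n) ℝ) with hB
  have hBnn : ∀ i j, 0 ≤ B i j := by
    intro i j
    by_cases h : i = j
    · subst h
      have h1 : B i i = A i i + c := by simp [hB]
      rw [h1, hc]
      have h2 : |A i i| ≤ ∑ l, |A l l| :=
        Finset.single_le_sum (fun l _ => abs_nonneg (A l l)) (Finset.mem_univ i)
      have := neg_abs_le (A i i)
      linarith
    · have h1 : B i j = A i j := by simp [hB, Matrix.one_apply, h]
      rw [h1]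
      exact hA i j h
  obtain ⟨r, hr0, hrmem, hrbd⟩ := pf_nonneg hn hBnn
  -- relation between the spectra of A and B
  have hshift : ∀ z : ℂ, z ∈ spectrum ℂ (A.map (algebraMap ℝ ℂ)) ↔
      z + c ∈ spectrum ℂ (B.map (algebraMap ℝ ℂ)) := by
    intro z
    rw [mem_spec_iff_det, mem_spec_iff_det]
    have h1 : (z + c) • (1 : Matrix (Fin n) (Fin n) ℂ) - B.map (algebraMap ℝ ℂ)
        = z • (1 : Matrix (Fin n) (Fin n) ℂ) - A.map (algebraMap ℝ ℂ) := by
      rw [hB, map_add_smul_one, add_smul]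
      abel
    rw [h1]
  set μ : ℝ := r - c with hμ
  have hμmem : ((μ : ℝ) : ℂ) ∈ spectrum ℂ (A.map (algebraMap ℝ ℂ)) := by
    rw [hshift]
    have : ((μ : ℝ) : ℂ) + c = (r : ℂ) := by
      rw [hμ]
      push_cast
      ring
    rw [this]
    exact hrmem
  have hub : ∀ x ∈ {x : ℝ | ∃ z ∈ spectrum ℂ (A.map (algebraMap ℝ ℂ)), z.re = x}, x ≤ μ := by
    rintro x ⟨z, hz, rfl⟩
    have h1 : z + c ∈ spectrum ℂ (B.map (algebraMap ℝ ℂ)) := (hshift z).mp hz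
    have h2 : ‖(z + c)‖ ≤ r := hrbd _ h1
    have h3 : z.re + c ≤ ‖(z + c)‖ := by
      have := Complex.re_le_norm (z + c)
      simpa using this
    rw [hμ]
    linarith
  have hgreat : IsGreatest {x : ℝ | ∃ z ∈ spectrum ℂ (A.map (algebraMap ℝ ℂ)), z.re = x} μ :=
    ⟨⟨((μ : ℝ) : ℂ), hμmem, by simp⟩, hub⟩
  have : lamMax A = μ := hgreat.csSup_eq
  rw [this]
  exact hμmem
end

section
/- Let G = (V, E) be a strongly connected directed graph on n ≥ 2 nodes. Define the directed graph G'' on the n(n−1) nodes {v_{i,j} : i ≠ j, 1 ≤ i,j ≤ n} with edge set E''₁ ∪ E''₂, where E''₁ = {(v_{i,j}, v_{j,k}) : (j,k) ∈ E} and E''₂ = {(v_{i,j}, v_{i,k}) : (j,k) ∈ E}. Then G'' is strongly connected. -/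
def PG {n : ℕ} (E : Fin n → Fin n → Prop)
    (p q : {x : Fin n × Fin n // x.1 ≠ x.2}) : Prop :=
  ((q : Fin n × Fin n).1 = (p : Fin n × Fin n).2 ∧
      E (p : Fin n × Fin n).2 (q : Fin n × Fin n).2) ∨
    ((q : Fin n × Fin n).1 = (p : Fin n × Fin n).1 ∧
      E (p : Fin n × Fin n).2 (q : Fin n × Fin n).2)

lemma pg_slide {n : ℕ} (E : Fin n → Fin n → Prop) {j b : Fin n}
    (h : Relation.ReflTransGen E j b) :
    ∀ p : {x : Fin n × Fin n // x.1 ≠ x.2}, p.val.2 = j →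
      ∃ q : {x : Fin n × Fin n // x.1 ≠ x.2},
        q.val.2 = b ∧ Relation.ReflTransGen (PG E) p q := by
  induction h using Relation.ReflTransGen.head_induction_on with
  | refl => exact fun p hp => ⟨p, hp, .refl⟩
  | head e _ ih =>
    rename_i j k _
    intro p hp
    by_cases hxk : p.val.1 = k
    · have hjk : j ≠ k := by rw [← hp, ← hxk]; exact fun h => p.2 h.symm
      obtain ⟨q, hq, hr⟩ := ih ⟨(j, k), hjk⟩ rfl
      exact ⟨q, hq, .head (Or.inl ⟨hp.symm, by rw [hp]; exact e⟩) hr⟩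
    · obtain ⟨q, hq, hr⟩ := ih ⟨(p.val.1, k), hxk⟩ rfl
      have step : PG E p ⟨(p.val.1, k), hxk⟩ := Or.inr ⟨rfl, by rw [hp]; exact e⟩
      exact ⟨q, hq, .head step hr⟩

lemma pg_pin {n : ℕ} (E : Fin n → Fin n → Prop) (a : Fin n) {j b : Fin n}
    (h : Relation.ReflTransGen E j b) (hb : b ≠ a) :
    ∀ p q : {x : Fin n × Fin n // x.1 ≠ x.2},
      (p.val = (a, j) ∨ (j = a ∧ p.val.2 = a)) → q.val = (a, b) →
      Relation.ReflTransGen (PG E) p q := by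
  induction h using Relation.ReflTransGen.head_induction_on with
  | refl =>
    intro p q hp hq
    rcases hp with hp | ⟨hja, _⟩
    · have : p = q := Subtype.ext (hp.trans hq.symm)
      exact this ▸ .refl
    · exact absurd hja hb
  | head e _ ih =>
    rename_i j k _
    intro p q hp hq
    rcases hp with hp | ⟨hja, hp2⟩
    · -- p = (a, j)
      have hp1 : p.val.1 = a := by rw [hp]
      have hp2 : p.val.2 = j := by rw [hp]
      by_cases hk : k = a
      · -- detour: (a,j) → (j,a)
        have hja : j ≠ a := by rw [← hp1, ← hp2]; exact fun h => p.2 h.symm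
        have step : PG E p ⟨(j, a), hja⟩ :=
          Or.inl ⟨hp2.symm, by rw [hp2]; exact hk ▸ e⟩
        exact .head step (ih ⟨(j, a), hja⟩ q (Or.inr ⟨hk, rfl⟩) hq)
      · have step : PG E p ⟨(a, k), fun h => hk h.symm⟩ :=
          Or.inr ⟨hp1.symm, by rw [hp2]; exact e⟩
        exact .head step (ih _ q (Or.inl rfl) hq)
    · -- p = (x, a), j = a
      by_cases hk : k = a
      · exact ih p q (Or.inr ⟨hk, hp2⟩) hq
      · have step : PG E p ⟨(a, k), fun h => hk h.symm⟩ :=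
          Or.inl ⟨hp2.symm, by show E p.val.2 k; rw [hp2]; exact hja ▸ e⟩
        exact .head step (ih _ q (Or.inl rfl) hq)

/-- Let `G` be a strongly connected directed graph on `n ≥ 2` nodes with edge relation
`E`.  Form the graph `G''` whose nodes are the ordered pairs `(i, j)` with `i ≠ j`, with
edges from `(i, j)` to `(j, k)` whenever `(j, k) ∈ E` and from `(i, j)` to `(i, k)`
whenever `(j, k) ∈ E`.  Then `G''` is strongly connected. -/
theorem pair_graph_strongly_connected {n : ℕ} (hn : 2 ≤ n) (E : Fin n → Fin n → Prop)
    (hsc : ∀ v v' : Fin n, Relation.ReflTransGen E v v') :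
    ∀ p q : {x : Fin n × Fin n // x.1 ≠ x.2},
      Relation.ReflTransGen
        (fun p q : {x : Fin n × Fin n // x.1 ≠ x.2} =>
          ((q : Fin n × Fin n).1 = (p : Fin n × Fin n).2 ∧
              E (p : Fin n × Fin n).2 (q : Fin n × Fin n).2) ∨
            ((q : Fin n × Fin n).1 = (p : Fin n × Fin n).1 ∧
              E (p : Fin n × Fin n).2 (q : Fin n × Fin n).2))
        p q := by
  intro p q
  show Relation.ReflTransGen (PG E) p q
  obtain ⟨r, hr2, hr⟩ := pg_slide E (hsc p.val.2 q.val.1) p rfl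
  refine hr.trans (pg_pin E q.val.1 (hsc q.val.1 q.val.2) (fun h => q.2 h.symm) r q
    (Or.inr ⟨rfl, hr2⟩) rfl)
end
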